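/- Let X be a real matrix whose columns are partitioned into finitely many blocks X_1, …, X_V (so X is the column-wise concatenation [X_1, X_2, …, X_V]). If the blocks are pairwise column-wise orthogonal, i.e., X_vᵀ X_{v'} = 0 for all v ≠ v', then ∑_{v=1}^{V} ‖X_v‖_* = ‖X‖_*, so the quantity ∑_{v} ‖X_v‖_* − ‖X‖_* attains its global minimum value 0. -/

import Mathlib

/-! The nuclear norm of `A` is the trace of `√(AᵀA)`. Column-wise orthogonality of the blocks
makes `XᵀX` block diagonal with blocks `X_vᵀX_v`; the positive square root of a block-diagonal
positive semidefinite matrix is the block diagonal of the square roots, and the trace of a block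
diagonal matrix is the sum of the traces of its blocks. -/

open Matrix

/-- The nuclear norm of a real matrix `A`: the sum of its singular values, i.e. the sum of the
square roots of the eigenvalues of the positive semidefinite symmetric matrix `Aᵀ * A`. -/
noncomputable def nuclearNorm {m n : Type*} [Fintype m] [Fintype n] [DecidableEq n]
    (A : Matrix m n ℝ) : ℝ :=
  ∑ i, Real.sqrt ((show (Aᵀ * A).IsHermitian by simpa using Matrix.isHermitian_conjTranspose_mul_self A).eigenvalues i)

open scoped MatrixOrder ComplexOrder

namespace Matrix

section RCLike

variable {𝕜 : Type*} [RCLike 𝕜]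

lemma IsHermitian.trace_cfc {n : Type*} [Fintype n] [DecidableEq n] {A : Matrix n n 𝕜}
    (hA : A.IsHermitian) (f : ℝ → ℝ) : (cfc f A).trace = ∑ i, (f (hA.eigenvalues i) : 𝕜) := by
  rw [hA.cfc_eq, IsHermitian.cfc, Unitary.conjStarAlgAut_apply, trace_mul_cycle,
    Unitary.star_mul_self_of_mem hA.eigenvectorUnitary.2, one_mul, trace_diagonal]
  rfl

lemma PosSemidef.trace_sqrt {n : Type*} [Fintype n] [DecidableEq n] {A : Matrix n n 𝕜}
    (hA : A.PosSemidef) : (CFC.sqrt A).trace = ∑ i, (√(hA.1.eigenvalues i) : 𝕜) := by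
  rw [CFC.sqrt_eq_real_sqrt A hA.nonneg, cfcₙ_eq_cfc, hA.1.trace_cfc]

variable {o : Type*} {n : o → Type*} [Fintype o] [DecidableEq o] [∀ i, Fintype (n i)]
  [∀ i, DecidableEq (n i)]

lemma PosSemidef.blockDiagonal' {A : ∀ i, Matrix (n i) (n i) 𝕜} (hA : ∀ i, (A i).PosSemidef) :
    (blockDiagonal' A).PosSemidef := by
  choose B hB using fun i => CStarAlgebra.nonneg_iff_eq_star_mul_self.mp (hA i).nonneg
  rw [funext hB, blockDiagonal'_mul]
  simpa [star_eq_conjTranspose, blockDiagonal'_conjTranspose] using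
    posSemidef_conjTranspose_mul_self (Matrix.blockDiagonal' B)

lemma sqrt_blockDiagonal' {A : ∀ i, Matrix (n i) (n i) 𝕜} (hA : ∀ i, (A i).PosSemidef) :
    CFC.sqrt (blockDiagonal' A) = blockDiagonal' fun i => CFC.sqrt (A i) := by
  refine CFC.sqrt_unique ?_
    (PosSemidef.blockDiagonal' fun i => nonneg_iff_posSemidef.mp (CFC.sqrt_nonneg (A i))).nonneg
  rw [← blockDiagonal'_mul]
  exact congrArg _ (funext fun i => CFC.sqrt_mul_sqrt_self (A i) (hA i).nonneg)

end RCLike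

lemma posSemidef_transpose_mul_self {m n R : Type*} [Fintype m] [Finite n] [Ring R]
    [PartialOrder R] [StarRing R] [TrivialStar R] [StarOrderedRing R] (A : Matrix m n R) :
    (Aᵀ * A).PosSemidef := by
  simpa [conjTranspose_eq_transpose_of_trivial] using posSemidef_conjTranspose_mul_self A

lemma transpose_mul_self_eq_blockDiagonal' {R : Type*} [NonUnitalNonAssocSemiring R] {m o : Type*}
    {n : o → Type*} [Fintype m] [DecidableEq o] (X : Matrix m (Σ i, n i) R)
    (horth : ∀ i j, i ≠ j → (X.submatrix id (Sigma.mk i))ᵀ * X.submatrix id (Sigma.mk j) = 0) :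
    Xᵀ * X =
      blockDiagonal' fun i => (X.submatrix id (Sigma.mk i))ᵀ * X.submatrix id (Sigma.mk i) := by
  ext ⟨i, k⟩ ⟨j, l⟩
  rcases eq_or_ne i j with rfl | hij
  · simp [blockDiagonal'_apply_eq, mul_apply]
  · simpa [blockDiagonal'_apply_ne _ _ _ hij, mul_apply] using congrFun₂ (horth i j hij) k l

end Matrix

lemma nuclearNorm_eq_trace_sqrt {m n : Type*} [Fintype m] [Fintype n] [DecidableEq n]
    (A : Matrix m n ℝ) : nuclearNorm A = (CFC.sqrt (Aᵀ * A)).trace := by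
  rw [(posSemidef_transpose_mul_self A).trace_sqrt]
  rfl

/-- For a real matrix `X` whose columns are partitioned into finitely many blocks `X_v`
(columns indexed by a sigma type), if the blocks are pairwise column-wise orthogonal,
i.e. `X_vᵀ * X_{v'} = 0` for all `v ≠ v'`, then the sum of the nuclear norms of the blocks
equals the nuclear norm of the full matrix; hence the quantity
`∑ v, ‖X_v‖_* − ‖X‖_*` attains its global minimum value `0`. -/
theorem sum_nuclearNorm_blocks_eq_nuclearNorm_of_orthogonal
    {m V : Type*} {n : V → Type*} [Fintype m] [Fintype V] [DecidableEq V]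
    [∀ v, Fintype (n v)] [∀ v, DecidableEq (n v)]
    (X : Matrix m (Σ v, n v) ℝ)
    (horth : ∀ v v' : V, v ≠ v' →
      (X.submatrix id (Sigma.mk v))ᵀ * (X.submatrix id (Sigma.mk v')) = 0) :
    (∑ v, nuclearNorm (X.submatrix id (Sigma.mk v))) = nuclearNorm X ∧
      (∑ v, nuclearNorm (X.submatrix id (Sigma.mk v))) - nuclearNorm X = 0 := by
  have hsum : ∑ v, nuclearNorm (X.submatrix id (Sigma.mk v)) = nuclearNorm X := by
    simp only [nuclearNorm_eq_trace_sqrt, transpose_mul_self_eq_blockDiagonal' X horth]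
    rw [sqrt_blockDiagonal' fun v => posSemidef_transpose_mul_self _, trace_blockDiagonal']
  exact ⟨hsum, sub_eq_zero.mpr hsum⟩
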